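/- Let d ≥ 2, let L be a finite set of affine functions ℝ^{d−1} → ℝ (each representing a non-vertical hyperplane in ℝ^d given by its graph), and let g : ℝ^{d−1} → ℝ be an affine function. Then the graph of g is contained in the corridor corr(L) if and only if g belongs to the convex hull of L, taken in the real vector space of affine functions ℝ^{d−1} → ℝ. -/

import Mathlib

/-!
If `g ∉ convexHull ℝ L`, separate `g` from this polytope in the finite-dimensional space of
affine maps. Reading the separating functional off the values at an affine basis, it has the
form `v ↦ A * v 0 + v.linear β`. If `A ≠ 0` this is `A` times evaluation at `A⁻¹ • β`, so no
`h ∈ convexHull ℝ L` agrees with `g` there. If `A = 0`, then along the ray `t • β` every such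
`h - g` has slope at least some `ε > 0` while `h 0` stays bounded below, so for large `t` again
no `h` meets `g`.
-/

noncomputable section

/-- The corridor of a set `L` of affine functions `ℝ^{d-1} → ℝ` (each representing a
non-vertical hyperplane in `ℝ^d` via its graph): the union of the graphs of all convex
combinations of functions in `L` (taken in the vector space of affine functions). -/
def corrD {E : Type*} [AddCommGroup E] [Module ℝ E]
    (L : Set (E →ᵃ[ℝ] ℝ)) : Set (E × ℝ) :=
  {p | ∃ h ∈ convexHull ℝ L, p.2 = h p.1}

/-- The graph of an affine function `g : ℝ^{d-1} → ℝ`, a non-vertical hyperplane in `ℝ^d`. -/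
def affGraph {E : Type*} [AddCommGroup E] [Module ℝ E]
    (g : E →ᵃ[ℝ] ℝ) : Set (E × ℝ) :=
  {p | p.2 = g p.1}

variable {E : Type*} [AddCommGroup E] [Module ℝ E]

namespace AffineMap

theorem apply_smul_eq (v : E →ᵃ[ℝ] ℝ) (t : ℝ) (x : E) : v (t • x) = v 0 + t * v.linear x := by
  rw [congrFun v.decomp]
  simp [add_comm]

theorem mul_apply_inv_smul {A : ℝ} (hA : A ≠ 0) (v : E →ᵃ[ℝ] ℝ) (β : E) :
    A * v (A⁻¹ • β) = A * v 0 + v.linear β := by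
  rw [apply_smul_eq, mul_add, ← mul_assoc, mul_inv_cancel₀ hA, one_mul]

theorem sum_mul_apply {ι : Type*} (s : Finset ι) (c : ι → ℝ) (p : ι → E) (v : E →ᵃ[ℝ] ℝ) :
    ∑ i ∈ s, c i * v (p i) = (∑ i ∈ s, c i) * v 0 + v.linear (∑ i ∈ s, c i • p i) := by
  have hv : ∀ x, v x = v.linear x + v 0 := fun x => congrFun v.decomp x
  calc ∑ i ∈ s, c i * v (p i) = ∑ i ∈ s, (c i * v 0 + v.linear (c i • p i)) :=
        Finset.sum_congr rfl fun i _ => by rw [hv, map_smul, smul_eq_mul]; ring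
    _ = _ := by rw [Finset.sum_add_distrib, ← Finset.sum_mul, map_sum]

end AffineMap

theorem Set.Finite.bddBelow_image_apply_convexHull {L : Set (E →ᵃ[ℝ] ℝ)} (hL : L.Finite)
    (x : E) : BddBelow ((fun h : E →ᵃ[ℝ] ℝ => h x) '' convexHull ℝ L) := by
  have hlin : IsLinearMap ℝ fun h : E →ᵃ[ℝ] ℝ => h x := ⟨fun _ _ => rfl, fun _ _ => rfl⟩
  rw [hlin.image_convexHull]
  exact ((hL.image _).isCompact_convexHull ℝ).bddBelow

theorem exists_separation_of_notMem_convexHull [FiniteDimensional ℝ E]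
    {L : Set (E →ᵃ[ℝ] ℝ)} (hL : L.Finite) {g : E →ᵃ[ℝ] ℝ} (hg : g ∉ convexHull ℝ L) :
    ∃ (A : ℝ) (β : E) (u : ℝ), A * g 0 + g.linear β < u ∧
      ∀ h ∈ convexHull ℝ L, u < A * h 0 + h.linear β := by
  obtain ⟨b⟩ := AffineBasis.exists_affineBasis_of_finiteDimensional
    (ι := Fin (Module.finrank ℝ E + 1)) (k := ℝ) (P := E) (Fintype.card_fin _)
  set Φ : (E →ᵃ[ℝ] ℝ) → Fin (Module.finrank ℝ E + 1) → ℝ := fun v i => v (b i)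
  have hΦ : IsLinearMap ℝ Φ := ⟨fun _ _ => rfl, fun _ _ => rfl⟩
  have hΦinj : Function.Injective Φ := fun v w hvw =>
    AffineMap.ext_on b.tot (by rintro _ ⟨i, rfl⟩; exact congrFun hvw i)
  have hΦg : Φ g ∉ convexHull ℝ (Φ '' L) := by
    rwa [← hΦ.image_convexHull, hΦinj.mem_set_image]
  obtain ⟨f, u, hgu, hu⟩ := geometric_hahn_banach_point_closed (convex_convexHull ℝ _)
    ((hL.image Φ).isClosed_convexHull ℝ) hΦg
  set c := fun i => f fun j => if i = j then 1 else 0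
  have hf : ∀ v, f (Φ v) = (∑ i, c i) * v 0 + v.linear (∑ i, c i • b i) := fun v => by
    rw [← AffineMap.sum_mul_apply]
    exact (LinearMap.pi_apply_eq_sum_univ (f : _ →ₗ[ℝ] ℝ) (Φ v)).trans
      (Finset.sum_congr rfl fun i _ => mul_comm _ _)
  refine ⟨∑ i, c i, ∑ i, c i • b i, u, hf g ▸ hgu, fun h hh => hf h ▸ hu _ ?_⟩
  rw [← hΦ.image_convexHull]
  exact Set.mem_image_of_mem Φ hh

theorem exists_forall_apply_ne_of_separation {K : Set (E →ᵃ[ℝ] ℝ)}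
    (hK : BddBelow ((fun h : E →ᵃ[ℝ] ℝ => h 0) '' K)) {g : E →ᵃ[ℝ] ℝ} {A u : ℝ} {β : E}
    (hg : A * g 0 + g.linear β < u) (hu : ∀ h ∈ K, u < A * h 0 + h.linear β) :
    ∃ x, ∀ h ∈ K, h x ≠ g x := by
  rcases eq_or_ne A 0 with rfl | hA
  · obtain ⟨m, hm⟩ := hK
    simp only [zero_mul, zero_add] at hg hu
    obtain ⟨n, hn⟩ := exists_nat_gt ((g 0 - m) / (u - g.linear β))
    have hgap : g 0 - m < n * (u - g.linear β) := (div_lt_iff₀ (by linarith)).1 hn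
    refine ⟨(n : ℝ) • β, fun h hh hgh => ?_⟩
    have hmh : m ≤ h 0 := hm ⟨h, hh, rfl⟩
    have hslope : n * u ≤ n * h.linear β := by gcongr; exact (hu h hh).le
    rw [AffineMap.apply_smul_eq, AffineMap.apply_smul_eq] at hgh
    linarith
  · refine ⟨A⁻¹ • β, fun h hh hgh => ?_⟩
    have huh := hu h hh
    rw [← AffineMap.mul_apply_inv_smul hA, hgh] at huh
    rw [← AffineMap.mul_apply_inv_smul hA] at hg
    linarith

theorem affGraph_subset_corrD_of_mem_convexHull {L : Set (E →ᵃ[ℝ] ℝ)} {g : E →ᵃ[ℝ] ℝ}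
    (hg : g ∈ convexHull ℝ L) : affGraph g ⊆ corrD L :=
  fun _ hp => ⟨g, hg, hp⟩

theorem mem_convexHull_of_affGraph_subset_corrD [FiniteDimensional ℝ E]
    {L : Set (E →ᵃ[ℝ] ℝ)} (hL : L.Finite) {g : E →ᵃ[ℝ] ℝ} (hgL : affGraph g ⊆ corrD L) :
    g ∈ convexHull ℝ L := by
  by_contra hg
  obtain ⟨A, β, u, hgu, hu⟩ := exists_separation_of_notMem_convexHull hL hg
  obtain ⟨x, hx⟩ :=
    exists_forall_apply_ne_of_separation (hL.bddBelow_image_apply_convexHull 0) hgu hu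
  obtain ⟨h, hh, hgh⟩ := hgL (show (x, g x) ∈ affGraph g from rfl)
  exact hx h hh hgh.symm

theorem affGraph_subset_corrD_iff [FiniteDimensional ℝ E] {L : Set (E →ᵃ[ℝ] ℝ)}
    (hL : L.Finite) (g : E →ᵃ[ℝ] ℝ) : affGraph g ⊆ corrD L ↔ g ∈ convexHull ℝ L :=
  ⟨mem_convexHull_of_affGraph_subset_corrD hL, affGraph_subset_corrD_of_mem_convexHull⟩

/-- A non-vertical hyperplane is contained in the corridor of `L` iff the corresponding affine
function lies in the convex hull of `L`. -/
theorem hyperplane_in_corridor_iff_mem_convexHull :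
    ∀ d : ℕ, 2 ≤ d →
      ∀ L : Finset ((Fin (d - 1) → ℝ) →ᵃ[ℝ] ℝ),
        ∀ g : (Fin (d - 1) → ℝ) →ᵃ[ℝ] ℝ,
          affGraph g ⊆ corrD (↑L) ↔ g ∈ convexHull ℝ (↑L : Set _) :=
  fun _ _ L => affGraph_subset_corrD_iff L.finite_toSet
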